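/- Assume the Bregman PDMM setup (see context) specialized to the entropic case: 𝒳 is the probability simplex Δ_n (n ≥ 2), φ = φ_1 = … = φ_m is the negative entropy φ(u) = Σ_{k=1}^n u_k ln u_k, all iterates x_i^t, y_i^t lie in the relative interior of Δ_n (strictly positive entries), γ = 1/4, τ = ρ/2, ν^0 = 0, and x_i^0 = y_i^0 = (1/n)𝟙 for all i (the uniform vector). Let x* ∈ Δ_n be a consensus point (x*_i = x* for all i), δ_max = max_i δ_i, T ≥ 1, and x̄_i^T = (1/T) Σ_{t=1}^T x_i^t. Then Σ_{i=1}^m f_i(x̄_i^T) − Σ_{i=1}^m f_i(x*) ≤ m(ρ + δ_max) ln(n) / T. -/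

import Mathlib

/-!
A Lyapunov argument for
`V_t = Σ_i ‖ν_i^t‖² / (2τ) + ρ Σ_i KL(x* ‖ y_i^t) + Σ_i δ_i KL(x* ‖ x_i^t)`,
where `KL` is the Bregman divergence of the negative entropy: the objective gap of `x^{t+1}` is
at most `V_t - V_{t+1}`. Primal optimality tested at `x*` and the three-point identity of Bregman
divergences bound the gap by telescoping divergences plus the dual term
`-⟪ν^t, (I - P) x^{t+1}⟫` (symmetry and stochasticity of `P` remove `x*`). The dual update turns
that term into the decrease of `‖ν‖² / (2τ)` plus `(τ / 2) ‖(I - P) x^{t+1}‖²`. Since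
`0 ≤ P ≤ I` gives `P² ≤ P`, this consensus error is at most `Σ_ij P_ij ‖y_i^{t+1} - x_j^{t+1}‖²`,
hence, by strong convexity of the entropy on the simplex, at most
`2 Σ_ij P_ij KL(y_i^{t+1} ‖ x_j^{t+1})`, which mirror-averaging optimality tested at `x*` bounds
by `Σ_i KL(x* ‖ x_i^{t+1}) - Σ_i KL(x* ‖ y_i^{t+1})`; `τ ≤ ρ` absorbs it into the `ρ`-term.
Telescoping, `V_T ≥ 0`, `V_0 ≤ m (ρ + δ_max) ln n` (the divergence from the uniform vector is at
most `ln n`) and Jensen's inequality for the averages give the rate.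
-/

open scoped RealInnerProductSpace BigOperators

/-- The probability simplex in ℝ^n. -/
def probSimplex (n : ℕ) : Set (EuclideanSpace ℝ (Fin n)) :=
  {u | (∀ k, 0 ≤ u k) ∧ ∑ k, u k = 1}

/-- The gradient of the negative entropy `φ(u) = Σ_k u_k ln u_k`, namely
`∇φ(u)_k = ln u_k + 1` (valid at points with positive entries). -/
noncomputable def negEntGrad {n : ℕ} (u : EuclideanSpace ℝ (Fin n)) :
    EuclideanSpace ℝ (Fin n) :=
  WithLp.toLp 2 (fun k => Real.log (u k) + 1)

open Set Real

section Consensus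

variable {ι E : Type*} [Fintype ι] [NormedAddCommGroup E] [InnerProductSpace ℝ E]

theorem sum_mul_norm_sub_sq {w : ι → ℝ} (hw : ∑ j, w j = 1) (y : E) (z : ι → E) :
    ∑ j, w j * ‖y - z j‖ ^ 2 =
      ‖y - ∑ j, w j • z j‖ ^ 2 + ∑ j, w j * ‖z j‖ ^ 2 - ‖∑ j, w j • z j‖ ^ 2 := by
  simp only [norm_sub_sq_real, mul_add, mul_sub, Finset.sum_add_distrib, Finset.sum_sub_distrib,
    ← Finset.sum_mul, hw, inner_sum, real_inner_smul_right, Finset.mul_sum,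
    mul_left_comm _ (2 : ℝ)]
  ring

namespace Matrix

def mix (A : Matrix ι ι ℝ) (z : ι → E) (i : ι) : E := ∑ j, A i j • z j

theorem mix_mul (A B : Matrix ι ι ℝ) (z : ι → E) : (A * B).mix z = A.mix (B.mix z) := by
  ext1 i
  simp only [mix, mul_apply, Finset.sum_smul, Finset.smul_sum, smul_smul]
  exact Finset.sum_comm

theorem sum_sum_mul_eq_sum_of_rowSum {P : Matrix ι ι ℝ} (hProw : ∀ i, ∑ j, P i j = 1)
    (a : ι → ℝ) : ∑ i, ∑ j, P i j * a i = ∑ i, a i := by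
  simp only [← Finset.sum_mul, hProw, one_mul]

theorem sum_sum_mul_eq_sum_of_colSum {P : Matrix ι ι ℝ} (hP : P.IsSymm)
    (hProw : ∀ i, ∑ j, P i j = 1) (a : ι → ℝ) : ∑ i, ∑ j, P i j * a j = ∑ j, a j := by
  rw [Finset.sum_comm]
  simp only [← Finset.sum_mul, ← hP.apply, hProw, one_mul]

theorem sum_inner_mix_comm {A : Matrix ι ι ℝ} (hA : A.IsSymm) (z w : ι → E) :
    ∑ i, ⟪z i, A.mix w i⟫ = ∑ i, ⟪A.mix z i, w i⟫ := by
  simp only [mix, inner_sum, sum_inner, real_inner_smul_left, real_inner_smul_right]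
  rw [Finset.sum_comm]
  refine Finset.sum_congr rfl fun i _ => Finset.sum_congr rfl fun j _ => ?_
  rw [hA.apply, real_inner_comm]

theorem sum_inner_mix_le_sum_norm_sq {P : Matrix ι ι ℝ} (hP : P.IsSymm)
    (hPnn : ∀ i j, 0 ≤ P i j) (hProw : ∀ i, ∑ j, P i j = 1) (z : ι → E) :
    ∑ i, ⟪z i, P.mix z i⟫ ≤ ∑ i, ‖z i‖ ^ 2 := by
  have hpair i j : P i j * ⟪z i, z j⟫ ≤ P i j * ‖z i‖ ^ 2 / 2 + P i j * ‖z j‖ ^ 2 / 2 := by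
    have h := mul_nonneg (hPnn i j) (sq_nonneg ‖z i - z j‖)
    rw [norm_sub_sq_real] at h
    linear_combination h / 2
  calc ∑ i, ⟪z i, P.mix z i⟫ = ∑ i, ∑ j, P i j * ⟪z i, z j⟫ := by
        simp only [mix, inner_sum, real_inner_smul_right]
    _ ≤ ∑ i, ∑ j, (P i j * ‖z i‖ ^ 2 / 2 + P i j * ‖z j‖ ^ 2 / 2) :=
        Finset.sum_le_sum fun i _ => Finset.sum_le_sum fun j _ => hpair i j
    _ = ∑ i, ‖z i‖ ^ 2 := by
        simp only [Finset.sum_add_distrib, mul_div_assoc,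
          sum_sum_mul_eq_sum_of_rowSum hProw, sum_sum_mul_eq_sum_of_colSum hP hProw]
        rw [← Finset.sum_add_distrib]
        exact Finset.sum_congr rfl fun i _ => by ring

open scoped MatrixOrder in
theorem sum_norm_sq_mix_le_sum_inner_mix {P : Matrix ι ι ℝ} (hP : P.IsSymm)
    (hPnn : ∀ i j, 0 ≤ P i j) (hProw : ∀ i, ∑ j, P i j = 1) (hPpsd : P.PosSemidef) (z : ι → E) :
    ∑ i, ‖P.mix z i‖ ^ 2 ≤ ∑ i, ⟪z i, P.mix z i⟫ := by
  classical
  -- With `S = √P`, the left side is the quadratic form of `P` at `S z`, the right side `‖S z‖²`.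
  set S := CFC.sqrt P
  have hS : S.IsSymm :=
    isHermitian_iff_isSymm.1 (LE.le.posSemidef (CFC.sqrt_nonneg P)).isHermitian
  have hSS : S * S = P := CFC.sqrt_mul_sqrt_self P hPpsd.nonneg
  have hsq (v : ι → E) : ∑ i, ⟪v i, P.mix v i⟫ = ∑ i, ‖S.mix v i‖ ^ 2 := by
    rw [← hSS, mix_mul, sum_inner_mix_comm hS]
    simp only [real_inner_self_eq_norm_sq]
  calc ∑ i, ‖P.mix z i‖ ^ 2 = ∑ i, ⟪S.mix z i, P.mix (S.mix z) i⟫ := by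
        rw [hsq, ← hSS, mix_mul]
    _ ≤ ∑ i, ‖S.mix z i‖ ^ 2 := sum_inner_mix_le_sum_norm_sq hP hPnn hProw _
    _ = ∑ i, ⟪z i, P.mix z i⟫ := (hsq z).symm

theorem sum_norm_sub_mix_sq_le {P : Matrix ι ι ℝ} (hP : P.IsSymm)
    (hPnn : ∀ i j, 0 ≤ P i j) (hProw : ∀ i, ∑ j, P i j = 1) (hPpsd : P.PosSemidef)
    (x y : ι → E) :
    ∑ i, ‖x i - P.mix x i‖ ^ 2 ≤ ∑ i, ∑ j, P i j * ‖y i - x j‖ ^ 2 := by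
  have hmix := sum_norm_sq_mix_le_sum_inner_mix hP hPnn hProw hPpsd x
  have hlhs : ∑ i, ‖x i - P.mix x i‖ ^ 2
      = ∑ i, ‖x i‖ ^ 2 - 2 * ∑ i, ⟪x i, P.mix x i⟫ + ∑ i, ‖P.mix x i‖ ^ 2 := by
    simp only [norm_sub_sq_real, Finset.sum_add_distrib, Finset.sum_sub_distrib, Finset.mul_sum]
  have hrhs : ∑ i, ∑ j, P i j * ‖y i - x j‖ ^ 2
      = ∑ i, ‖y i - P.mix x i‖ ^ 2 + ∑ i, ‖x i‖ ^ 2 - ∑ i, ‖P.mix x i‖ ^ 2 := by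
    simp only [sum_mul_norm_sub_sq (hProw _), Finset.sum_add_distrib, Finset.sum_sub_distrib,
      sum_sum_mul_eq_sum_of_colSum hP hProw, mix]
  have hvar : 0 ≤ ∑ i, ‖y i - P.mix x i‖ ^ 2 := Finset.sum_nonneg fun i _ => sq_nonneg _
  linarith

theorem sum_inner_neg_add_mix {P : Matrix ι ι ℝ} (hP : P.IsSymm)
    (hProw : ∀ i, ∑ j, P i j = 1) (ν x : ι → E) (c : E) :
    ∑ i, ⟪-ν i + P.mix ν i, x i - c⟫ = -∑ i, ⟪ν i, x i - P.mix x i⟫ := by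
  have hmix : ∑ i, ⟪P.mix ν i, x i - c⟫ = ∑ i, ⟪ν i, P.mix x i - c⟫ := by
    rw [← sum_inner_mix_comm hP]
    congr! 2 with i
    simp only [mix, smul_sub, Finset.sum_sub_distrib, ← Finset.sum_smul, hProw, one_smul]
  simp only [inner_add_left, inner_neg_left, Finset.sum_add_distrib, Finset.sum_neg_distrib]
  rw [hmix]
  simp only [inner_sub_right, Finset.sum_sub_distrib]
  ring

end Matrix

end Consensus

section InnerProduct

variable {E : Type*} [NormedAddCommGroup E] [InnerProductSpace ℝ E]

theorem neg_inner_eq_of_eq_add_smul {ν ν' w : E} {τ : ℝ} (hτ : τ ≠ 0)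
    (h : ν' = ν + τ • w) :
    -⟪ν, w⟫ = (‖ν‖ ^ 2 - ‖ν'‖ ^ 2) / (2 * τ) + τ / 2 * ‖w‖ ^ 2 := by
  subst h
  rw [norm_add_sq_real, norm_smul, real_inner_smul_right, Real.norm_eq_abs, mul_pow, sq_abs]
  field_simp
  ring

def bregmanDiv (φ : E → ℝ) (g : E → E) (u v : E) : ℝ := φ u - φ v - ⟪g v, u - v⟫

theorem inner_sub_bregmanDiv (φ : E → ℝ) (g : E → E) (a b c : E) :
    ⟪g a - g b, c - a⟫ = bregmanDiv φ g c b - bregmanDiv φ g c a - bregmanDiv φ g a b := by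
  simp only [bregmanDiv, inner_sub_left, inner_sub_right]
  ring

theorem sub_le_of_bregman_prox_optimality {f φ : E → ℝ} {g : E → E} {x x' y c d v : E}
    {ρ δ : ℝ} (hρ : 0 ≤ ρ) (hδ : 0 ≤ δ) (hy : 0 ≤ bregmanDiv φ g x' y)
    (hx : 0 ≤ bregmanDiv φ g x' x) (hv : 0 ≤ ⟪v, x' - c⟫)
    (hsub : f c ≥ f x' + ⟪d - ρ • (g x' - g y) - δ • (g x' - g x) - v, c - x'⟫) :
    f x' - f c ≤ ⟪d, x' - c⟫ + ρ * (bregmanDiv φ g c y - bregmanDiv φ g c x')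
      + δ * (bregmanDiv φ g c x - bregmanDiv φ g c x') := by
  rw [inner_sub_left, inner_sub_left, inner_sub_left, real_inner_smul_left, real_inner_smul_left,
    inner_sub_bregmanDiv, inner_sub_bregmanDiv, inner_sub_right, ← neg_sub x' c,
    inner_neg_right] at hsub
  rw [inner_sub_right] at hv ⊢
  nlinarith [mul_nonneg hρ hy, mul_nonneg hδ hx]

theorem sum_bregmanDiv_le_of_mirror {ι : Type*} [Fintype ι] {P : Matrix ι ι ℝ}
    (hP : P.IsSymm) (hProw : ∀ i, ∑ j, P i j = 1) {φ : E → ℝ} {g : E → E} {x y : ι → E} {c : E}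
    (hmirror : ∀ i, 0 ≤ ∑ j, P i j * ⟪g (y i) - g (x j), c - y i⟫) :
    ∑ i, ∑ j, P i j * bregmanDiv φ g (y i) (x j)
      ≤ ∑ i, bregmanDiv φ g c (x i) - ∑ i, bregmanDiv φ g c (y i) := by
  have h := Finset.sum_nonneg fun i (_ : i ∈ Finset.univ) => hmirror i
  simp only [inner_sub_bregmanDiv φ, mul_sub, Finset.sum_sub_distrib,
    Matrix.sum_sum_mul_eq_sum_of_colSum hP hProw,
    Matrix.sum_sum_mul_eq_sum_of_rowSum hProw] at h
  linarith

theorem sum_sub_le_of_convexOn_average {κ ι : Type*} [Fintype ι] {f : ι → E → ℝ}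
    (hf : ∀ i, ConvexOn ℝ univ (f i)) {s : Finset κ} (hs : s.Nonempty) (x : κ → ι → E)
    (c : E) :
    ∑ i, f i ((1 / (s.card : ℝ)) • ∑ t ∈ s, x t i) - ∑ i, f i c ≤
      (1 / (s.card : ℝ)) * ∑ t ∈ s, ∑ i, (f i (x t i) - f i c) := by
  have hcard : (s.card : ℝ) ≠ 0 := by exact_mod_cast hs.card_ne_zero
  have hjensen i : f i ((1 / (s.card : ℝ)) • ∑ t ∈ s, x t i) ≤
      (1 / (s.card : ℝ)) * ∑ t ∈ s, f i (x t i) := by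
    have := (hf i).map_sum_le (t := s) (w := fun _ => 1 / (s.card : ℝ)) (p := fun t => x t i)
      (fun _ _ => by positivity) (by simp [hcard]) (fun _ _ => mem_univ _)
    simpa only [Finset.smul_sum, Finset.mul_sum, smul_eq_mul] using this
  calc ∑ i, f i ((1 / (s.card : ℝ)) • ∑ t ∈ s, x t i) - ∑ i, f i c
      ≤ ∑ i, (1 / (s.card : ℝ)) * ∑ t ∈ s, f i (x t i) - ∑ i, f i c := by
        gcongr with i; exact hjensen i
    _ = (1 / (s.card : ℝ)) * ∑ t ∈ s, ∑ i, (f i (x t i) - f i c) := by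
        simp only [Finset.sum_sub_distrib, ← Finset.mul_sum, Finset.sum_const, nsmul_eq_mul]
        rw [Finset.sum_comm]
        field_simp

end InnerProduct

theorem Finset.sum_Icc_one_eq_sum_range {M : Type*} [AddCommMonoid M] (g : ℕ → M) (T : ℕ) :
    ∑ t ∈ Icc 1 T, g t = ∑ t ∈ range T, g (t + 1) := by
  rw [← Finset.Ico_add_one_right_eq_Icc, Finset.sum_Ico_eq_sum_range]
  simp [add_comm]

theorem ConvexOn.add_mul_sub_le_of_hasDerivAt {S : Set ℝ} {f : ℝ → ℝ} {x y f' : ℝ}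
    (hf : ConvexOn ℝ S f) (hx : x ∈ S) (hy : y ∈ S) (h : HasDerivAt f f' x) :
    f x + f' * (y - x) ≤ f y := by
  rcases lt_trichotomy x y with hxy | rfl | hxy
  · have := hf.le_slope_of_hasDerivAt hx hy hxy h
    rw [slope_def_field, le_div_iff₀ (sub_pos.2 hxy)] at this
    linarith
  · simp
  · have := hf.slope_le_of_hasDerivAt hy hx hxy h
    rw [slope_def_field, div_le_iff₀ (sub_pos.2 hxy)] at this
    linarith

theorem hasDerivAt_mul_log_sub_sq_div_two {z : ℝ} (hz : z ≠ 0) :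
    HasDerivAt (fun z => z * log z - z ^ 2 / 2) (log z + 1 - z) z := by
  have hsq : HasDerivAt (fun z : ℝ => z ^ 2 / 2) z z := by
    simpa using (hasDerivAt_pow 2 z).div_const 2
  exact (hasDerivAt_mul_log hz).sub hsq

theorem convexOn_mul_log_sub_sq_div_two :
    ConvexOn ℝ (Icc 0 1) (fun z => z * log z - z ^ 2 / 2) := by
  refine convexOn_of_hasDerivWithinAt2_nonneg (convex_Icc 0 1) (f' := fun z => log z + 1 - z)
    (f'' := fun z => z⁻¹ - 1) (continuous_mul_log.sub (by fun_prop)).continuousOn ?_ ?_ ?_ <;>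
    rw [interior_Icc] <;> intro z hz
  · exact (hasDerivAt_mul_log_sub_sq_div_two hz.1.ne').hasDerivWithinAt
  · exact (((hasDerivAt_log hz.1.ne').add_const 1).sub (hasDerivAt_id z)).hasDerivWithinAt
  · exact sub_nonneg.2 ((one_le_inv₀ hz.1).2 hz.2.le)

theorem sq_sub_div_two_le_mul_log_sub {a b : ℝ} (ha : a ∈ Icc 0 1) (hb : b ∈ Ioc 0 1) :
    (a - b) ^ 2 / 2 ≤ a * log a - b * log b - (log b + 1) * (a - b) := by
  have := convexOn_mul_log_sub_sq_div_two.add_mul_sub_le_of_hasDerivAt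
    (Ioc_subset_Icc_self hb) ha (hasDerivAt_mul_log_sub_sq_div_two hb.1.ne')
  linear_combination this

noncomputable def negEnt {n : ℕ} (u : EuclideanSpace ℝ (Fin n)) : ℝ := ∑ k, u k * log (u k)

local notation "KL" => bregmanDiv negEnt negEntGrad

section Entropy

variable {n : ℕ}

theorem le_one_of_mem_probSimplex {u : EuclideanSpace ℝ (Fin n)} (hu : u ∈ probSimplex n)
    (k : Fin n) : u k ≤ 1 :=
  hu.2 ▸ Finset.single_le_sum (fun j _ => hu.1 j) (Finset.mem_univ k)

theorem bregmanDiv_negEnt_eq_sum (u v : EuclideanSpace ℝ (Fin n)) :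
    KL u v = ∑ k, (u k * log (u k) - v k * log (v k) - (log (v k) + 1) * (u k - v k)) := by
  simp only [bregmanDiv, negEnt, negEntGrad, PiLp.inner_apply, PiLp.sub_apply,
    RCLike.inner_apply, conj_trivial, Finset.sum_sub_distrib, mul_comm]

theorem norm_sub_sq_div_two_le_bregmanDiv_negEnt {u v : EuclideanSpace ℝ (Fin n)}
    (hu : u ∈ probSimplex n) (hv : v ∈ probSimplex n) (hvpos : ∀ k, 0 < v k) :
    ‖u - v‖ ^ 2 / 2 ≤ KL u v := by
  rw [bregmanDiv_negEnt_eq_sum, EuclideanSpace.real_norm_sq_eq, Finset.sum_div]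
  exact Finset.sum_le_sum fun k _ => sq_sub_div_two_le_mul_log_sub
    ⟨hu.1 k, le_one_of_mem_probSimplex hu k⟩ ⟨hvpos k, le_one_of_mem_probSimplex hv k⟩

theorem bregmanDiv_negEnt_nonneg {u v : EuclideanSpace ℝ (Fin n)}
    (hu : u ∈ probSimplex n) (hv : v ∈ probSimplex n) (hvpos : ∀ k, 0 < v k) : 0 ≤ KL u v :=
  (by positivity : (0 : ℝ) ≤ ‖u - v‖ ^ 2 / 2).trans
    (norm_sub_sq_div_two_le_bregmanDiv_negEnt hu hv hvpos)

theorem bregmanDiv_negEnt_uniform_le {u v : EuclideanSpace ℝ (Fin n)}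
    (hu : u ∈ probSimplex n) (hv : ∀ k, v k = 1 / n) : KL u v ≤ log n := by
  have hn : (n : ℝ) ≠ 0 := by
    rintro h
    obtain rfl : n = 0 := by exact_mod_cast h
    simpa using hu.2
  have hφ : ∑ k, u k * log (u k) ≤ 0 :=
    Finset.sum_nonpos fun k _ => mul_log_nonpos (hu.1 k) (le_one_of_mem_probSimplex hu k)
  simp only [bregmanDiv_negEnt_eq_sum, hv, mul_sub, Finset.sum_sub_distrib, ← Finset.mul_sum,
    hu.2, Finset.sum_const, Finset.card_univ, Fintype.card_fin, nsmul_eq_mul, one_div, log_inv]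
  field_simp
  linarith

end Entropy

section PDMM

variable {n : ℕ} {ι : Type*} [Fintype ι]

noncomputable def pdmmEnergy (ρ τ : ℝ) (δ : ι → ℝ) (c : EuclideanSpace ℝ (Fin n))
    (x y ν : ι → EuclideanSpace ℝ (Fin n)) : ℝ :=
  (∑ i, ‖ν i‖ ^ 2) / (2 * τ) + ρ * ∑ i, KL c (y i) + ∑ i, δ i * KL c (x i)

theorem pdmmEnergy_nonneg {ρ τ : ℝ} {δ : ι → ℝ} (hρ : 0 ≤ ρ) (hτ : 0 ≤ τ)
    (hδ : ∀ i, 0 ≤ δ i) {c : EuclideanSpace ℝ (Fin n)} (hc : c ∈ probSimplex n)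
    {x y ν : ι → EuclideanSpace ℝ (Fin n)} (hxΔ : ∀ i, x i ∈ probSimplex n)
    (hyΔ : ∀ i, y i ∈ probSimplex n) (hxpos : ∀ i k, 0 < x i k) (hypos : ∀ i k, 0 < y i k) :
    0 ≤ pdmmEnergy ρ τ δ c x y ν := by
  unfold pdmmEnergy
  have hy := Finset.sum_nonneg fun i (_ : i ∈ Finset.univ) =>
    bregmanDiv_negEnt_nonneg hc (hyΔ i) (hypos i)
  have hx := Finset.sum_nonneg fun i (_ : i ∈ Finset.univ) =>
    mul_nonneg (hδ i) (bregmanDiv_negEnt_nonneg hc (hxΔ i) (hxpos i))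
  positivity

theorem pdmmEnergy_le_of_uniform {ρ τ δmax : ℝ} {δ : ι → ℝ} (hρ : 0 ≤ ρ)
    (hδ : ∀ i, 0 ≤ δ i) (hδmax : ∀ i, δ i ≤ δmax) {c : EuclideanSpace ℝ (Fin n)}
    (hc : c ∈ probSimplex n) {x y ν : ι → EuclideanSpace ℝ (Fin n)}
    (hx : ∀ i k, x i k = 1 / n) (hy : ∀ i k, y i k = 1 / n) (hν : ∀ i, ν i = 0) :
    pdmmEnergy ρ τ δ c x y ν ≤ Fintype.card ι * (ρ + δmax) * log n := by
  have hlog := log_natCast_nonneg n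
  have hy' : ∑ i, KL c (y i) ≤ ∑ _i : ι, log n :=
    Finset.sum_le_sum fun i _ => bregmanDiv_negEnt_uniform_le hc (hy i)
  have hx' : ∑ i, δ i * KL c (x i) ≤ ∑ _i : ι, δmax * log n :=
    Finset.sum_le_sum fun i _ =>
      (mul_le_mul_of_nonneg_left (bregmanDiv_negEnt_uniform_le hc (hx i)) (hδ i)).trans
        (mul_le_mul_of_nonneg_right (hδmax i) hlog)
  simp only [Finset.sum_const, Finset.card_univ, nsmul_eq_mul] at hy' hx'
  simp only [pdmmEnergy, hν, norm_zero, sq, mul_zero, Finset.sum_const_zero, zero_div, zero_add]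
  linarith [mul_le_mul_of_nonneg_left hy' hρ]

theorem sum_norm_sub_mix_sq_le_of_mirror {P : Matrix ι ι ℝ} (hP : P.IsSymm)
    (hPnn : ∀ i j, 0 ≤ P i j) (hProw : ∀ i, ∑ j, P i j = 1) (hPpsd : P.PosSemidef)
    {x y : ι → EuclideanSpace ℝ (Fin n)} (hxΔ : ∀ i, x i ∈ probSimplex n)
    (hyΔ : ∀ i, y i ∈ probSimplex n) (hxpos : ∀ i k, 0 < x i k) {c : EuclideanSpace ℝ (Fin n)}
    (hmirror : ∀ i, 0 ≤ ∑ j, P i j * ⟪negEntGrad (y i) - negEntGrad (x j), c - y i⟫) :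
    ∑ i, ‖x i - P.mix x i‖ ^ 2 ≤ 2 * (∑ i, KL c (x i) - ∑ i, KL c (y i)) := by
  have hpinsker i j : ‖y i - x j‖ ^ 2 ≤ 2 * KL (y i) (x j) := by
    linarith [norm_sub_sq_div_two_le_bregmanDiv_negEnt (hyΔ i) (hxΔ j) (hxpos j)]
  calc ∑ i, ‖x i - P.mix x i‖ ^ 2 ≤ ∑ i, ∑ j, P i j * ‖y i - x j‖ ^ 2 :=
        Matrix.sum_norm_sub_mix_sq_le hP hPnn hProw hPpsd x y
    _ ≤ ∑ i, ∑ j, P i j * (2 * KL (y i) (x j)) :=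
        Finset.sum_le_sum fun i _ => Finset.sum_le_sum fun j _ =>
          mul_le_mul_of_nonneg_left (hpinsker i j) (hPnn i j)
    _ = 2 * ∑ i, ∑ j, P i j * KL (y i) (x j) := by
        simp only [Finset.mul_sum, mul_left_comm]
    _ ≤ 2 * (∑ i, KL c (x i) - ∑ i, KL c (y i)) :=
        mul_le_mul_of_nonneg_left (sum_bregmanDiv_le_of_mirror hP hProw hmirror) zero_le_two

theorem sum_sub_le_pdmmEnergy_sub {f : ι → EuclideanSpace ℝ (Fin n) → ℝ}
    {P : Matrix ι ι ℝ} (hP : P.IsSymm) (hPnn : ∀ i j, 0 ≤ P i j) (hProw : ∀ i, ∑ j, P i j = 1)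
    (hPpsd : P.PosSemidef) {ρ τ : ℝ} {δ : ι → ℝ} (hτ : 0 < τ) (hτρ : τ ≤ ρ) (hδ : ∀ i, 0 ≤ δ i)
    {x y ν : ℕ → ι → EuclideanSpace ℝ (Fin n)}
    (hxΔ : ∀ t i, x t i ∈ probSimplex n) (hyΔ : ∀ t i, y t i ∈ probSimplex n)
    (hxpos : ∀ t i k, 0 < x t i k) (hypos : ∀ t i k, 0 < y t i k)
    (hmirror : ∀ t : ℕ, ∀ i, ∀ u ∈ probSimplex n,
      0 ≤ ∑ j, P i j * ⟪negEntGrad (y t i) - negEntGrad (x t j), u - y t i⟫)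
    (hprimal : ∀ t : ℕ, ∀ i, ∃ g : EuclideanSpace ℝ (Fin n),
      (∀ v ∈ probSimplex n, 0 ≤ ⟪g, x (t + 1) i - v⟫) ∧
      ∀ v, f i v ≥ f i (x (t + 1) i) +
        ⟪-ν t i + (∑ j, P i j • ν t j)
            - ρ • (negEntGrad (x (t + 1) i) - negEntGrad (y t i))
            - δ i • (negEntGrad (x (t + 1) i) - negEntGrad (x t i))
            - g, v - x (t + 1) i⟫)
    (hdual : ∀ t : ℕ, ∀ i, ν (t + 1) i =
      ν t i + τ • (x (t + 1) i - ∑ j, P i j • x (t + 1) j))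
    {c : EuclideanSpace ℝ (Fin n)} (hc : c ∈ probSimplex n) (t : ℕ) :
    ∑ i, (f i (x (t + 1) i) - f i c) ≤ pdmmEnergy ρ τ δ c (x t) (y t) (ν t) -
      pdmmEnergy ρ τ δ c (x (t + 1)) (y (t + 1)) (ν (t + 1)) := by
  set x' := x (t + 1)
  set y' := y (t + 1)
  have hprox : ∀ i, f i (x' i) - f i c ≤ ⟪-ν t i + P.mix (ν t) i, x' i - c⟫
      + ρ * (KL c (y t i) - KL c (x' i)) + δ i * (KL c (x t i) - KL c (x' i)) := fun i => by
    obtain ⟨g, hg, hsub⟩ := hprimal t i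
    exact sub_le_of_bregman_prox_optimality (hτ.le.trans hτρ) (hδ i)
      (bregmanDiv_negEnt_nonneg (hxΔ _ i) (hyΔ t i) (hypos t i))
      (bregmanDiv_negEnt_nonneg (hxΔ _ i) (hxΔ t i) (hxpos t i)) (hg c hc) (hsub c)
  have hdualterm : ∑ i, ⟪-ν t i + P.mix (ν t) i, x' i - c⟫ =
      (∑ i, ‖ν t i‖ ^ 2 - ∑ i, ‖ν (t + 1) i‖ ^ 2) / (2 * τ)
        + τ / 2 * ∑ i, ‖x' i - P.mix x' i‖ ^ 2 := by
    have hν i := neg_inner_eq_of_eq_add_smul (w := x' i - P.mix x' i) hτ.ne' (hdual t i)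
    rw [Matrix.sum_inner_neg_add_mix hP hProw, ← Finset.sum_neg_distrib]
    simp only [hν, Finset.sum_add_distrib,
      ← Finset.sum_div, ← Finset.mul_sum, Finset.sum_sub_distrib]
  have hconsensus := sum_norm_sub_mix_sq_le_of_mirror hP hPnn hProw hPpsd (hxΔ (t + 1))
    (hyΔ (t + 1)) (hxpos (t + 1)) (fun i => hmirror (t + 1) i c hc)
  have hgap := Finset.sum_le_sum fun i (_ : i ∈ Finset.univ) => hprox i
  simp only [Finset.sum_add_distrib, mul_sub, Finset.sum_sub_distrib, ← Finset.mul_sum,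
    hdualterm] at hgap
  have hW : 0 ≤ ∑ i, ‖x' i - P.mix x' i‖ ^ 2 := Finset.sum_nonneg fun i _ => sq_nonneg _
  have h1 := mul_le_mul_of_nonneg_left hconsensus (by positivity : 0 ≤ τ / 2)
  have h2 := mul_le_mul_of_nonneg_right hτρ
    (by linarith : 0 ≤ ∑ i, KL c (x' i) - ∑ i, KL c (y' i))
  rw [sub_div] at hgap
  rw [pdmmEnergy, pdmmEnergy, Finset.sum_sub_distrib]
  linarith

end PDMM

theorem entropic_bregman_pdmm_rate_general {n m : ℕ}
    (f : Fin m → EuclideanSpace ℝ (Fin n) → ℝ)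
    (hf : ∀ i, ConvexOn ℝ Set.univ (f i))
    (P : Matrix (Fin m) (Fin m) ℝ) (hPsym : P.IsSymm)
    (hPnn : ∀ i j, 0 ≤ P i j) (hProw : ∀ i, ∑ j, P i j = 1) (hPpsd : P.PosSemidef)
    (ρ τ : ℝ) (δ : Fin m → ℝ)
    (hρ : 0 < ρ) (hτ : τ = ρ / 2) (hδ : ∀ i, 0 ≤ δ i)
    (x y ν : ℕ → Fin m → EuclideanSpace ℝ (Fin n))
    (hxΔ : ∀ t i, x t i ∈ probSimplex n) (hyΔ : ∀ t i, y t i ∈ probSimplex n)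
    (hxpos : ∀ t i k, 0 < x t i k) (hypos : ∀ t i k, 0 < y t i k)
    (hmirror : ∀ t : ℕ, ∀ i, ∀ u ∈ probSimplex n,
      0 ≤ ∑ j, P i j * ⟪negEntGrad (y t i) - negEntGrad (x t j), u - y t i⟫)
    (hprimal : ∀ t : ℕ, ∀ i, ∃ g : EuclideanSpace ℝ (Fin n),
      (∀ v ∈ probSimplex n, 0 ≤ ⟪g, x (t + 1) i - v⟫) ∧
      ∀ v, f i v ≥ f i (x (t + 1) i) +
        ⟪-ν t i + (∑ j, P i j • ν t j)
            - ρ • (negEntGrad (x (t + 1) i) - negEntGrad (y t i))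
            - δ i • (negEntGrad (x (t + 1) i) - negEntGrad (x t i))
            - g, v - x (t + 1) i⟫)
    (hdual : ∀ t : ℕ, ∀ i, ν (t + 1) i =
      ν t i + τ • (x (t + 1) i - ∑ j, P i j • x (t + 1) j))
    (hν0 : ∀ i, ν 0 i = 0)
    (hx0 : ∀ i k, x 0 i k = 1 / (n : ℝ)) (hy0 : ∀ i k, y 0 i k = 1 / (n : ℝ))
    (xstar : EuclideanSpace ℝ (Fin n)) (hxstar : xstar ∈ probSimplex n)
    (δmax : ℝ) (hδmax : IsGreatest (Set.range δ) δmax)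
    (T : ℕ) (hT : 1 ≤ T)
    (xbar : Fin m → EuclideanSpace ℝ (Fin n))
    (hxbar : ∀ i, xbar i = (1 / (T : ℝ)) • ∑ t ∈ Finset.Icc 1 T, x t i) :
    (∑ i, f i (xbar i)) - ∑ i, f i xstar ≤
      (m : ℝ) * (ρ + δmax) * Real.log n / (T : ℝ) := by
  have hτpos : 0 < τ := by rw [hτ]; positivity
  have hτρ : τ ≤ ρ := by rw [hτ]; linarith
  set V : ℕ → ℝ := fun t => pdmmEnergy ρ τ δ xstar (x t) (y t) (ν t)
  have htelescope : ∑ t ∈ Finset.Icc 1 T, ∑ i, (f i (x t i) - f i xstar) ≤ V 0 - V T := by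
    rw [Finset.sum_Icc_one_eq_sum_range]
    exact (Finset.sum_le_sum fun t _ => sum_sub_le_pdmmEnergy_sub hPsym hPnn hProw hPpsd hτpos
      hτρ hδ hxΔ hyΔ hxpos hypos hmirror hprimal hdual hxstar t).trans_eq
      (Finset.sum_range_sub' V T)
  have hVT : 0 ≤ V T :=
    pdmmEnergy_nonneg hρ.le hτpos.le hδ hxstar (hxΔ T) (hyΔ T) (hxpos T) (hypos T)
  have hV0 : V 0 ≤ m * (ρ + δmax) * Real.log n := by
    simpa using pdmmEnergy_le_of_uniform hρ.le hδ (fun i => hδmax.2 ⟨i, rfl⟩) hxstar hx0 hy0 hν0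
  have havg := sum_sub_le_of_convexOn_average hf (s := Finset.Icc 1 T) ⟨1, by simpa⟩ x xstar
  simp only [Nat.card_Icc, Nat.add_sub_cancel] at havg
  simp only [hxbar]
  calc _ ≤ (1 / (T : ℝ)) * ∑ t ∈ Finset.Icc 1 T, ∑ i, (f i (x t i) - f i xstar) := havg
    _ ≤ (1 / (T : ℝ)) * (m * (ρ + δmax) * Real.log n) := by gcongr; linarith
    _ = (m : ℝ) * (ρ + δmax) * Real.log n / (T : ℝ) := by ring

/-- Corollary 1, objective bound: entropic Bregman PDMM on the probability
simplex achieves `Σ_i f_i(x̄_i^T) − Σ_i f_i(x*) ≤ m (ρ + δ_max) ln(n) / T`. -/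
theorem entropic_bregman_pdmm_rate {n m : ℕ} (hn : 2 ≤ n)
    (f : Fin m → EuclideanSpace ℝ (Fin n) → ℝ)
    (hf : ∀ i, ConvexOn ℝ Set.univ (f i))
    (P : Matrix (Fin m) (Fin m) ℝ) (hPsym : P.IsSymm)
    (hPnn : ∀ i j, 0 ≤ P i j) (hProw : ∀ i, ∑ j, P i j = 1) (hPpsd : P.PosSemidef)
    (ρ τ γ : ℝ) (δ : Fin m → ℝ)
    (hρ : 0 < ρ) (hτ : τ = ρ / 2) (hγ : γ = 1 / 4) (hδ : ∀ i, 0 ≤ δ i)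
    (x y ν : ℕ → Fin m → EuclideanSpace ℝ (Fin n))
    (hxΔ : ∀ t i, x t i ∈ probSimplex n) (hyΔ : ∀ t i, y t i ∈ probSimplex n)
    (hxpos : ∀ t i k, 0 < x t i k) (hypos : ∀ t i k, 0 < y t i k)
    (hmirror : ∀ t : ℕ, ∀ i, ∀ u ∈ probSimplex n,
      0 ≤ ∑ j, P i j * ⟪negEntGrad (y t i) - negEntGrad (x t j), u - y t i⟫)
    (hprimal : ∀ t : ℕ, ∀ i, ∃ g : EuclideanSpace ℝ (Fin n),
      (∀ v ∈ probSimplex n, 0 ≤ ⟪g, x (t + 1) i - v⟫) ∧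
      ∀ v, f i v ≥ f i (x (t + 1) i) +
        ⟪-ν t i + (∑ j, P i j • ν t j)
            - ρ • (negEntGrad (x (t + 1) i) - negEntGrad (y t i))
            - δ i • (negEntGrad (x (t + 1) i) - negEntGrad (x t i))
            - g, v - x (t + 1) i⟫)
    (hdual : ∀ t : ℕ, ∀ i, ν (t + 1) i =
      ν t i + τ • (x (t + 1) i - ∑ j, P i j • x (t + 1) j))
    (hν0 : ∀ i, ν 0 i = 0)
    (hx0 : ∀ i k, x 0 i k = 1 / (n : ℝ)) (hy0 : ∀ i k, y 0 i k = 1 / (n : ℝ))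
    (xstar : EuclideanSpace ℝ (Fin n)) (hxstar : xstar ∈ probSimplex n)
    (δmax : ℝ) (hδmax : IsGreatest (Set.range δ) δmax)
    (T : ℕ) (hT : 1 ≤ T)
    (xbar : Fin m → EuclideanSpace ℝ (Fin n))
    (hxbar : ∀ i, xbar i = (1 / (T : ℝ)) • ∑ t ∈ Finset.Icc 1 T, x t i) :
    (∑ i, f i (xbar i)) - ∑ i, f i xstar ≤
      (m : ℝ) * (ρ + δmax) * Real.log n / (T : ℝ) :=
  entropic_bregman_pdmm_rate_general f hf P hPsym hPnn hProw hPpsd ρ τ δ hρ hτ hδ x y ν hxΔ hyΔ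
    hxpos hypos hmirror hprimal hdual hν0 hx0 hy0 xstar hxstar δmax hδmax T hT xbar hxbar
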